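/- arXiv:2106.02724 — 2 statements merged into one kernel-verified Lean document; each statement's English description precedes it below -/
import Mathlib

section
/- A ranked tree shape with n leaves, encoded as a matrix D satisfying: D_{ii}=2 for all i; D_{i-1,j} - 1 ≤ D_{ij} ≤ D_{i-1,j} for all i,j; and for each i exactly one j satisfies D_{i-1,j} - D_{ij} = 1; corresponds bijectively to an F-matrix via the cumulative-sum map F_{ij} = Σ_{k=1}^{j} D_{ik}, with inverse D_{ij} = F_{ij} - F_{i,j-1} (with F_{i0} = 0). -/
/-!
For `F = cumSum D`, the gap `g j = F (i-1) j - F i j` between consecutive rows has increments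
`g j - g (j-1) = D (i-1) j - D i j`. The row conditions on `D` thus say that `g` climbs from
`g 0 = 0` to `g (i-1) = 1` in steps of `0` or `1`, and the constraints on an F-matrix are this
statement written in terms of `F`, together with the diagonal values `F i i = i + 1`,
`F (i+1) i = i` obtained by summing it. Bounds `0 ≤ D ≤ 2` follow from monotonicity of the rows
of `F` and of the columns of `D` below `D i i = 2`. Cumulative sums and row differences are
mutually inverse by telescoping.
-/

/-- `IsFMat n F` says that `F` (indexed from 1) is an F-matrix for ranked tree
shapes with `n` leaves: an `(n-1)×(n-1)` lower-triangular matrix of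
non-negative integers satisfying the diagonal, subdiagonal, first-column and
general difference constraints. Entries outside `{1,…,n-1}²` or above the
diagonal are `0`. -/
def IsFMat (n : ℕ) (F : ℕ → ℕ → ℤ) : Prop :=
  (∀ i j, 0 ≤ F i j) ∧
  (∀ i j, ¬(1 ≤ j ∧ j ≤ i ∧ i ≤ n - 1) → F i j = 0) ∧
  (∀ i, 1 ≤ i → i ≤ n - 1 → F i i = (i : ℤ) + 1) ∧
  (∀ i, 1 ≤ i → i ≤ n - 2 → F (i + 1) i = (i : ℤ)) ∧
  (∀ i, 3 ≤ i → i ≤ n - 1 → max 0 (F (i - 1) 1 - 1) ≤ F i 1 ∧ F i 1 ≤ F (i - 1) 1) ∧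
  (∀ i k, 4 ≤ i → i ≤ n - 1 → 2 ≤ k → k ≤ i - 2 →
    max 0 (F i (k - 1)) ≤ F i k ∧
    F (i - 1) k - 1 ≤ F i k ∧ F i k ≤ F (i - 1) k ∧
    F i (k - 1) + F (i - 1) k - F (i - 1) (k - 1) - 1 ≤ F i k ∧
    F i k ≤ F i (k - 1) + F (i - 1) k - F (i - 1) (k - 1))

/-- `IsDMat n D` says that `D` encodes a ranked tree shape with `n` leaves:
`D i j ∈ {0,1,2}` is the number of branches created at the `(j+1)`-st split
that have not yet bifurcated by the end of interval `i`.  `D` is an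
`(n-1)×(n-1)` lower-triangular matrix (indexed from 1) with `D i i = 2`,
columns decreasing by at most one at each step, and exactly one column
decreasing at each step. -/
def IsDMat (n : ℕ) (D : ℕ → ℕ → ℤ) : Prop :=
  (∀ i j, 0 ≤ D i j ∧ D i j ≤ 2) ∧
  (∀ i j, ¬(1 ≤ j ∧ j ≤ i ∧ i ≤ n - 1) → D i j = 0) ∧
  (∀ i, 1 ≤ i → i ≤ n - 1 → D i i = 2) ∧
  (∀ i j, 2 ≤ i → i ≤ n - 1 → 1 ≤ j → j ≤ i - 1 →
    D (i - 1) j - 1 ≤ D i j ∧ D i j ≤ D (i - 1) j) ∧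
  (∀ i, 2 ≤ i → i ≤ n - 1 → ∃! j, 1 ≤ j ∧ j ≤ i - 1 ∧ D (i - 1) j - D i j = 1)

/-- The cumulative-sum map sending a `D`-matrix to its `F`-matrix,
`F i j = ∑_{k=1}^{j} D i k` (and `0` outside the lower-triangular index range). -/
def cumSum (n : ℕ) (D : ℕ → ℕ → ℤ) : ℕ → ℕ → ℤ := fun i j =>
  if 1 ≤ j ∧ j ≤ i ∧ i ≤ n - 1 then ∑ k ∈ Finset.Icc 1 j, D i k else 0

open Finset

lemma sum_Icc_sub_pred {G : Type*} [AddCommGroup G] (f : ℕ → G) (m : ℕ) :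
    ∑ k ∈ Icc 1 m, (f k - f (k - 1)) = f m - f 0 := by
  induction m with
  | zero => simp
  | succ m ih => rw [sum_Icc_succ_top (by omega), ih]; simp

lemma existsUnique_eq_one_of_sum_eq_one {α : Type*} {s : α → ℤ} {t : Finset α}
    (h01 : ∀ a ∈ t, s a = 0 ∨ s a = 1) (hsum : ∑ a ∈ t, s a = 1) :
    ∃! a, a ∈ t ∧ s a = 1 := by
  classical
  have hcard : #{a ∈ t | s a = 1} = 1 := by
    have : (#{a ∈ t | s a = 1} : ℤ) = ∑ a ∈ t, s a := by
      rw [natCast_card_filter]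
      refine sum_congr rfl fun a ha => ?_
      rcases h01 a ha with h | h <;> simp [h]
    omega
  obtain ⟨a, ha⟩ := card_eq_one.mp hcard
  have hmem : ∀ b, b ∈ t ∧ s b = 1 ↔ b = a := fun b => by simpa using Finset.ext_iff.mp ha b
  exact ⟨a, (hmem a).2 rfl, fun b hb => (hmem b).1 hb⟩

def rowDiff (n : ℕ) (F : ℕ → ℕ → ℤ) : ℕ → ℕ → ℤ := fun i j =>
  if 1 ≤ j ∧ j ≤ i ∧ i ≤ n - 1 then F i j - F i (j - 1) else 0

section CumSum

variable {n : ℕ} {D : ℕ → ℕ → ℤ}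

lemma cumSum_eq_sum {i j : ℕ} (hji : j ≤ i) (hi : i ≤ n - 1) :
    cumSum n D i j = ∑ k ∈ Icc 1 j, D i k := by
  unfold cumSum
  split_ifs with h
  · rfl
  · obtain rfl : j = 0 := by omega
    simp

lemma cumSum_succ {i j : ℕ} (hji : j + 1 ≤ i) (hi : i ≤ n - 1) :
    cumSum n D i (j + 1) = cumSum n D i j + D i (j + 1) := by
  rw [cumSum_eq_sum hji hi, cumSum_eq_sum (by omega) hi, sum_Icc_succ_top (by omega)]

lemma cumSum_one {i : ℕ} (h1 : 1 ≤ i) (hi : i ≤ n - 1) : cumSum n D i 1 = D i 1 := by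
  rw [cumSum_succ h1 hi]
  simp [cumSum]

lemma cumSum_sub_cumSum_pred {i j : ℕ} (hj : 1 ≤ j) (hji : j ≤ i) (hi : i ≤ n - 1) :
    D i j = cumSum n D i j - cumSum n D i (j - 1) := by
  obtain ⟨j, rfl⟩ : ∃ k, j = k + 1 := ⟨j - 1, by omega⟩
  rw [cumSum_succ hji hi, Nat.add_sub_cancel]
  ring

lemma rowDiff_cumSum (hD : ∀ i j, ¬(1 ≤ j ∧ j ≤ i ∧ i ≤ n - 1) → D i j = 0) :
    rowDiff n (cumSum n D) = D := by
  funext i j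
  unfold rowDiff
  split_ifs with h
  · exact (cumSum_sub_cumSum_pred h.1 h.2.1 h.2.2).symm
  · exact (hD i j h).symm

lemma cumSum_rowDiff (hD : ∀ i j, ¬(1 ≤ j ∧ j ≤ i ∧ i ≤ n - 1) → D i j = 0) :
    cumSum n (rowDiff n D) = D := by
  funext i j
  unfold cumSum
  split_ifs with h
  · have hdiff : ∀ k ∈ Icc 1 j, rowDiff n D i k = D i k - D i (k - 1) := fun k hk => by
      rw [mem_Icc] at hk
      exact if_pos ⟨hk.1, hk.2.trans h.2.1, h.2.2⟩
    rw [sum_congr rfl hdiff, sum_Icc_sub_pred, hD i 0 (by omega), sub_zero]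
  · exact (hD i j h).symm

end CumSum

section DMat

variable {n : ℕ} {D : ℕ → ℕ → ℤ}

lemma IsDMat.exists_col_drop (hD : IsDMat n D) {i : ℕ} (h1 : 1 ≤ i) (hi : i + 1 ≤ n - 1) :
    ∃ j₀, 1 ≤ j₀ ∧ j₀ ≤ i ∧ ∀ j, 1 ≤ j → j ≤ i →
      D i j - D (i + 1) j = if j = j₀ then 1 else 0 := by
  obtain ⟨j₀, ⟨hj₀, hj₀i, hdrop⟩, huniq⟩ := hD.2.2.2.2 (i + 1) (by omega) hi
  simp only [Nat.add_sub_cancel] at hj₀i hdrop huniq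
  refine ⟨j₀, hj₀, hj₀i, fun j hj hji => ?_⟩
  split_ifs with h
  · rwa [h]
  · have := hD.2.2.2.1 (i + 1) j (by omega) hi hj (by omega)
    have : D i j - D (i + 1) j ≠ 1 := fun hone => h (huniq j ⟨hj, hji, hone⟩)
    simp only [Nat.add_sub_cancel] at *
    omega

lemma IsDMat.exists_cumSum_gap (hD : IsDMat n D) {i : ℕ} (h1 : 1 ≤ i) (hi : i + 1 ≤ n - 1) :
    ∃ j₀, 1 ≤ j₀ ∧ j₀ ≤ i ∧ ∀ j ≤ i,
      cumSum n D i j - cumSum n D (i + 1) j = if j₀ ≤ j then 1 else 0 := by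
  obtain ⟨j₀, hj₀, hj₀i, hdrop⟩ := hD.exists_col_drop h1 hi
  refine ⟨j₀, hj₀, hj₀i, fun j hj => ?_⟩
  induction j with
  | zero => rw [if_neg (by omega)]; simp [cumSum]
  | succ j ih =>
    rw [cumSum_succ hj (by omega), cumSum_succ (by omega) hi]
    have := hdrop (j + 1) (by omega) hj
    have := ih (by omega)
    split_ifs at * <;> omega

lemma IsDMat.cumSum_gap_mem (hD : IsDMat n D) {i j : ℕ} (hj : j ≤ i) (hi : i + 1 ≤ n - 1) :
    0 ≤ cumSum n D i j - cumSum n D (i + 1) j ∧ cumSum n D i j - cumSum n D (i + 1) j ≤ 1 := by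
  rcases Nat.eq_zero_or_pos i with rfl | h1
  · obtain rfl : j = 0 := by omega
    simp [cumSum]
  obtain ⟨j₀, -, -, hgap⟩ := hD.exists_cumSum_gap h1 hi
  have := hgap j hj
  split_ifs at this <;> omega

lemma IsDMat.cumSum_gap_last (hD : IsDMat n D) {i : ℕ} (h1 : 1 ≤ i) (hi : i + 1 ≤ n - 1) :
    cumSum n D i i - cumSum n D (i + 1) i = 1 := by
  obtain ⟨j₀, -, hj₀i, hgap⟩ := hD.exists_cumSum_gap h1 hi
  simpa [hj₀i] using hgap i le_rfl

lemma IsDMat.cumSum_diag (hD : IsDMat n D) {i : ℕ} (h1 : 1 ≤ i) (hi : i ≤ n - 1) :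
    cumSum n D i i = i + 1 := by
  induction i, h1 using Nat.le_induction with
  | base =>
    rw [cumSum_succ le_rfl hi, hD.2.2.1 1 le_rfl hi]
    simp [cumSum]
  | succ i h1 ih =>
    rw [cumSum_succ le_rfl hi, hD.2.2.1 (i + 1) (by omega) hi]
    have := hD.cumSum_gap_last h1 hi
    have := ih (by omega)
    push_cast
    omega

lemma IsDMat.cumSum_nonneg (hD : IsDMat n D) (i j : ℕ) : 0 ≤ cumSum n D i j := by
  unfold cumSum
  split_ifs
  exacts [sum_nonneg fun k _ => (hD.1 i k).1, le_rfl]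

theorem IsDMat.isFMat_cumSum (hD : IsDMat n D) : IsFMat n (cumSum n D) := by
  refine ⟨hD.cumSum_nonneg, fun i j h => if_neg h, fun i h1 hi => hD.cumSum_diag h1 hi,
    fun i h1 hi => ?_, fun i h3 hi => ?_, fun i k h4 hi hk hki => ?_⟩
  · have := hD.cumSum_gap_last h1 (by omega)
    have := hD.cumSum_diag h1 (by omega)
    omega
  · rw [cumSum_one (by omega) hi, cumSum_one (by omega) (by omega)]
    have := hD.2.2.2.1 i 1 (by omega) hi le_rfl (by omega)
    exact ⟨max_le (hD.1 i 1).1 (by omega), by omega⟩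
  · obtain ⟨i, rfl⟩ : ∃ m, i = m + 1 := ⟨i - 1, by omega⟩
    obtain ⟨k, rfl⟩ : ∃ m, k = m + 1 := ⟨k - 1, by omega⟩
    simp only [Nat.add_sub_cancel]
    have hrow := cumSum_succ (D := D) (i := i + 1) (j := k) (by omega) hi
    have hrow' := cumSum_succ (n := n) (D := D) (i := i) (j := k) (by omega) (by omega)
    have := hD.cumSum_gap_mem (i := i) (j := k) (by omega) hi
    have := hD.cumSum_gap_mem (i := i) (j := k + 1) (by omega) hi
    have := hD.2.2.2.1 (i + 1) (k + 1) (by omega) hi (by omega) (by omega)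
    have := (hD.1 (i + 1) (k + 1)).1
    have := hD.cumSum_nonneg (i + 1) k
    simp only [Nat.add_sub_cancel] at *
    exact ⟨max_le (by omega) (by omega), by omega, by omega, by omega, by omega⟩

end DMat

section FMat

variable {n : ℕ} {F : ℕ → ℕ → ℤ}

lemma IsFMat.apply_zero_right (hF : IsFMat n F) (i : ℕ) : F i 0 = 0 :=
  hF.2.1 i 0 (by omega)

lemma IsFMat.apply_succ_self (hF : IsFMat n F) {i : ℕ} (hi : i + 1 ≤ n - 1) :
    F (i + 1) i = i := by
  rcases Nat.eq_zero_or_pos i with rfl | h1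
  · simpa using hF.apply_zero_right 1
  · exact hF.2.2.2.1 i h1 (by omega)

lemma IsFMat.col_gap_mem (hF : IsFMat n F) {i k : ℕ} (hk : k + 1 ≤ i) (hi : i + 1 ≤ n - 1) :
    0 ≤ F i k - F (i + 1) k ∧ F i k - F (i + 1) k ≤ 1 := by
  rcases (show k = 0 ∨ k = 1 ∨ 2 ≤ k by omega) with rfl | rfl | hk2
  · simp [hF.apply_zero_right]
  · have := hF.2.2.2.2.1 (i + 1) (by omega) hi
    simp only [Nat.add_sub_cancel, max_le_iff] at this
    omega
  · have := hF.2.2.2.2.2 (i + 1) k (by omega) hi hk2 (by omega)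
    simp only [Nat.add_sub_cancel] at this
    omega

lemma IsFMat.row_gap_step (hF : IsFMat n F) {i k : ℕ} (hk : k + 1 ≤ i) (hi : i + 1 ≤ n - 1) :
    0 ≤ (F i (k + 1) - F (i + 1) (k + 1)) - (F i k - F (i + 1) k) ∧
      (F i (k + 1) - F (i + 1) (k + 1)) - (F i k - F (i + 1) k) ≤ 1 := by
  rcases (show k + 1 = i ∨ (k = 0 ∧ 2 ≤ i) ∨ (1 ≤ k ∧ k + 2 ≤ i) by omega) with
    rfl | ⟨rfl, hi2⟩ | ⟨hk1, hki⟩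
  · have := hF.2.2.1 (k + 1) (by omega) (by omega)
    have := hF.apply_succ_self hi
    have := hF.col_gap_mem (i := k + 1) (k := k) le_rfl hi
    push_cast at *
    omega
  · have := hF.col_gap_mem (k := 1) (by omega) hi
    simp only [hF.apply_zero_right, sub_zero, zero_add]
    omega
  · have := hF.2.2.2.2.2 (i + 1) (k + 1) (by omega) hi (by omega) (by omega)
    simp only [Nat.add_sub_cancel] at this
    omega

lemma IsFMat.apply_le_apply_succ (hF : IsFMat n F) {i k : ℕ} (hk : k + 1 ≤ i) (hi : i ≤ n - 1) :
    F i k ≤ F i (k + 1) := by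
  rcases (show k = 0 ∨ k + 1 = i ∨ (1 ≤ k ∧ i = k + 1 + 1) ∨ (1 ≤ k ∧ k + 3 ≤ i) by omega) with
    rfl | rfl | ⟨hk1, rfl⟩ | ⟨hk1, hki⟩
  · simpa [hF.apply_zero_right] using hF.1 i 1
  · have := hF.2.2.1 (k + 1) (by omega) hi
    have := hF.apply_succ_self hi
    push_cast at *
    omega
  · have := hF.col_gap_mem (i := k + 1) (k := k) le_rfl hi
    have := hF.apply_succ_self (i := k) (by omega)
    have := hF.apply_succ_self hi
    push_cast at *
    omega
  · have := (hF.2.2.2.2.2 i (k + 1) (by omega) hi (by omega) (by omega)).1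
    simp only [Nat.add_sub_cancel, max_le_iff] at this
    exact this.2

lemma rowDiff_succ {i k : ℕ} (hk : k + 1 ≤ i) (hi : i ≤ n - 1) :
    rowDiff n F i (k + 1) = F i (k + 1) - F i k := by
  simp [rowDiff, hk, hi]

lemma IsFMat.rowDiff_diag (hF : IsFMat n F) {i : ℕ} (h1 : 1 ≤ i) (hi : i ≤ n - 1) :
    rowDiff n F i i = 2 := by
  obtain ⟨i, rfl⟩ : ∃ m, i = m + 1 := ⟨i - 1, by omega⟩
  rw [rowDiff_succ le_rfl hi, hF.2.2.1 (i + 1) h1 hi, hF.apply_succ_self hi]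
  push_cast
  ring

lemma IsFMat.rowDiff_col_step (hF : IsFMat n F) {i j : ℕ} (hj : 1 ≤ j) (hji : j ≤ i)
    (hi : i + 1 ≤ n - 1) :
    0 ≤ rowDiff n F i j - rowDiff n F (i + 1) j ∧ rowDiff n F i j - rowDiff n F (i + 1) j ≤ 1 := by
  obtain ⟨k, rfl⟩ : ∃ m, j = m + 1 := ⟨j - 1, by omega⟩
  rw [rowDiff_succ hji (by omega), rowDiff_succ (by omega) hi]
  have := hF.row_gap_step hji hi
  constructor <;> linarith

lemma IsFMat.rowDiff_nonneg (hF : IsFMat n F) (i j : ℕ) : 0 ≤ rowDiff n F i j := by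
  unfold rowDiff
  split_ifs with h
  · obtain ⟨k, rfl⟩ : ∃ m, j = m + 1 := ⟨j - 1, by omega⟩
    simpa using hF.apply_le_apply_succ h.2.1 h.2.2
  · exact le_rfl

lemma IsFMat.rowDiff_le_two (hF : IsFMat n F) (i j : ℕ) : rowDiff n F i j ≤ 2 := by
  by_cases h : 1 ≤ j ∧ j ≤ i ∧ i ≤ n - 1
  · obtain ⟨hj, hji, hi⟩ := h
    induction i, hji using Nat.le_induction with
    | base => exact (hF.rowDiff_diag hj hi).le
    | succ i hji ih =>
      have := hF.rowDiff_col_step hj hji hi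
      have := ih (by omega)
      omega
  · simp [rowDiff, h]

lemma IsFMat.existsUnique_col_drop (hF : IsFMat n F) {i : ℕ} (h1 : 1 ≤ i) (hi : i + 1 ≤ n - 1) :
    ∃! j, 1 ≤ j ∧ j ≤ i ∧ rowDiff n F i j - rowDiff n F (i + 1) j = 1 := by
  have h01 : ∀ j ∈ Icc 1 i, rowDiff n F i j - rowDiff n F (i + 1) j = 0 ∨
      rowDiff n F i j - rowDiff n F (i + 1) j = 1 := fun j hj => by
    rw [mem_Icc] at hj
    have := hF.rowDiff_col_step hj.1 hj.2 hi
    omega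
  have hsum : ∑ j ∈ Icc 1 i, (rowDiff n F i j - rowDiff n F (i + 1) j) = 1 := by
    have htel : ∀ j ∈ Icc 1 i, rowDiff n F i j - rowDiff n F (i + 1) j =
        (F i j - F (i + 1) j) - (F i (j - 1) - F (i + 1) (j - 1)) := fun j hj => by
      rw [mem_Icc] at hj
      obtain ⟨k, rfl⟩ : ∃ m, j = m + 1 := ⟨j - 1, by omega⟩
      rw [rowDiff_succ hj.2 (by omega), rowDiff_succ (by omega) hi, Nat.add_sub_cancel]
      ring
    rw [sum_congr rfl htel, sum_Icc_sub_pred (fun j => F i j - F (i + 1) j),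
      hF.apply_zero_right, hF.apply_zero_right, hF.apply_succ_self hi, hF.2.2.1 i h1 (by omega)]
    ring
  simpa only [mem_Icc, and_assoc] using existsUnique_eq_one_of_sum_eq_one h01 hsum

theorem IsFMat.isDMat_rowDiff (hF : IsFMat n F) : IsDMat n (rowDiff n F) := by
  refine ⟨fun i j => ⟨hF.rowDiff_nonneg i j, hF.rowDiff_le_two i j⟩,
    fun i j h => if_neg h, fun i h1 hi => hF.rowDiff_diag h1 hi,
    fun i j h2 hi hj hji => ?_, fun i h2 hi => ?_⟩ <;>
  obtain ⟨i, rfl⟩ : ∃ m, i = m + 1 := ⟨i - 1, by omega⟩ <;>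
  simp only [Nat.add_sub_cancel] at *
  · have := hF.rowDiff_col_step hj hji hi
    constructor <;> linarith
  · exact hF.existsUnique_col_drop (by omega) hi

end FMat

theorem dmat_fmat_bijection_general (n : ℕ) :
    Set.BijOn (cumSum n) {D | IsDMat n D} {F | IsFMat n F} ∧
    (∀ D, IsDMat n D → ∀ i j, 1 ≤ j → j ≤ i → i ≤ n - 1 →
      D i j = cumSum n D i j - cumSum n D i (j - 1)) := by
  have hinv : Set.InvOn (rowDiff n) (cumSum n) {D | IsDMat n D} {F | IsFMat n F} :=
    ⟨fun D hD => rowDiff_cumSum hD.2.1, fun F hF => cumSum_rowDiff hF.2.1⟩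
  exact ⟨hinv.bijOn (fun D hD => hD.isFMat_cumSum) (fun F hF => hF.isDMat_rowDiff),
    fun D _ i j hj hji hi => cumSum_sub_cumSum_pred hj hji hi⟩

/-- Ranked tree shapes with `n` leaves, encoded as `D`-matrices,
correspond bijectively to F-matrices via the cumulative-sum map
`F i j = ∑_{k=1}^{j} D i k`, whose inverse is given by the difference map
`D i j = F i j - F i (j-1)` (with `F i 0 = 0`). -/
theorem dmat_fmat_bijection (n : ℕ) (hn : 2 ≤ n) :
    Set.BijOn (cumSum n) {D | IsDMat n D} {F | IsFMat n F} ∧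
    (∀ D, IsDMat n D → ∀ i j, 1 ≤ j → j ≤ i → i ≤ n - 1 →
      D i j = cumSum n D i j - cumSum n D i (j - 1)) :=
  dmat_fmat_bijection_general n
end

section
/- Under the Yule model, for j > 1 and i ≥ j, the probability that neither branch descending from internal node j+1 has bifurcated by interval i is P(D_{ij} = 2) = j(j-1)/(i(i-1)), the probability exactly one has bifurcated is P(D_{ij} = 1) = 2j(i-j)/(i(i-1)), and the probability both have bifurcated is P(D_{ij} = 0) = (i-j)(i-j-1)/(i(i-1)); hence E[D_{ij}] = 2j/i. -/
open scoped Classical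

/-- Collapse the pair of lineage labels `{a, b}`: the larger label is merged
into the smaller one and all larger labels are shifted down by one. -/
def collapse (a b x : ℕ) : ℕ :=
  if x = max a b then min a b else if max a b < x then x - 1 else x

/-- The lineage map of the coalescent after `s` merge events: `chainMap n ω s i`
is the label of the lineage currently containing leaf `i`, where `ω` lists the
pair of lineages merged at each step. -/
def chainMap (n : ℕ) (ω : Fin (n - 1) → Fin n × Fin n) : ℕ → Fin n → ℕ
  | 0 => fun i => (i : ℕ)
  | s + 1 => fun i =>
      if h : s < n - 1 then
        collapse ((ω ⟨s, h⟩).1 : ℕ) ((ω ⟨s, h⟩).2 : ℕ) (chainMap n ω s i)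
      else chainMap n ω s i

/-- `ω` is a valid sequence of coalescent merge choices: at step `s` (when
`n - s` lineages remain) an unordered pair of the `n - s` current lineages is
chosen. -/
def ValidSeq (n : ℕ) (ω : Fin (n - 1) → Fin n × Fin n) : Prop :=
  ∀ s : Fin (n - 1), ((ω s).1 : ℕ) < ((ω s).2 : ℕ) ∧ ((ω s).2 : ℕ) < n - (s : ℕ)

/-- The sample space of the Yule / Kingman coalescent with `n` leaves: all
sequences of merge choices, each such sequence being equally likely (at every
step a uniformly chosen pair of the extant lineages merges). -/
noncomputable def coalSpace (n : ℕ) : Finset (Fin (n - 1) → Fin n × Fin n) :=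
  Finset.univ.filter (ValidSeq n)

/-- The block (set of leaves) of the lineage containing leaf `i` when `k`
lineages remain. -/
noncomputable def blockOf (n : ℕ) (ω : Fin (n - 1) → Fin n × Fin n) (k : ℕ)
    (i : Fin n) : Finset (Fin n) :=
  Finset.univ.filter (fun j => chainMap n ω (n - k) j = chainMap n ω (n - k) i)

/-- `Zext n ω i k`: leaf `i` is still an external branch (a singleton lineage)
when `k` lineages remain. -/
def Zext (n : ℕ) (ω : Fin (n - 1) → Fin n × Fin n) (i : Fin n) (k : ℕ) : Prop :=
  blockOf n ω k i = {i}

/-- The partition (set of blocks) of the leaves when `k` lineages remain. -/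
noncomputable def blocksAt (n : ℕ) (ω : Fin (n - 1) → Fin n × Fin n) (k : ℕ) :
    Finset (Finset (Fin n)) :=
  Finset.univ.image (fun i => blockOf n ω k i)

/-- The F-matrix of the ranked tree shape generated by the coalescent `ω`:
`FmatOf n ω i j` is the number of branches extant when `j + 1` branches are
present that have not yet bifurcated by the interval with `i + 1` branches,
i.e. the number of common blocks of the partitions into `j + 1` and `i + 1`
lineages. -/
noncomputable def FmatOf (n : ℕ) (ω : Fin (n - 1) → Fin n × Fin n) (i j : ℕ) : ℕ :=
  (blocksAt n ω (j + 1) ∩ blocksAt n ω (i + 1)).card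

/-- The D-matrix entry `D i j = F i j - F i (j-1)`: the number of children of
the node creating the `(j+1)`-st branch that have not bifurcated by interval
`i`. -/
noncomputable def DmatOf (n : ℕ) (ω : Fin (n - 1) → Fin n × Fin n) (i j : ℕ) : ℤ :=
  (FmatOf n ω i j : ℤ) - (FmatOf n ω i (j - 1) : ℤ)

/-- Probability of an event under the Yule / Kingman coalescent with `n`
leaves (uniform measure on merge-choice sequences). -/
noncomputable def coalP (n : ℕ) (A : (Fin (n - 1) → Fin n × Fin n) → Prop) : ℝ :=
  (((coalSpace n).filter A).card : ℝ) / ((coalSpace n).card : ℝ)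

/-- Expectation of a random variable under the Yule / Kingman coalescent with
`n` leaves. -/
noncomputable def coalE (n : ℕ) (X : (Fin (n - 1) → Fin n × Fin n) → ℝ) : ℝ :=
  (∑ ω ∈ coalSpace n, X ω) / ((coalSpace n).card : ℝ)


section Chain

variable {n : ℕ} {ω : Fin (n - 1) → Fin n × Fin n}

lemma collapse_eq' (a b x : ℕ) (hab : a < b) :
    collapse a b x = if x = b then a else if b < x then x - 1 else x := by
  unfold collapse
  rw [max_eq_right hab.le, min_eq_left hab.le]

lemma chainMap_succ_apply {s : ℕ} (hs : s < n - 1) (m : Fin n) :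
    chainMap n ω (s + 1) m =
      collapse ((ω ⟨s, hs⟩).1 : ℕ) ((ω ⟨s, hs⟩).2 : ℕ) (chainMap n ω s m) := by
  simp only [chainMap, dif_pos hs]

lemma chainMap_lt (hv : ValidSeq n ω) {s : ℕ} (hs : s ≤ n - 1) (l : Fin n) :
    chainMap n ω s l < n - s := by
  induction s with
  | zero => simpa [chainMap] using l.isLt
  | succ s ih =>
    have hs' : s < n - 1 := hs
    have hab := hv ⟨s, hs'⟩
    have hx := ih (le_of_lt hs')
    have hb : ((ω ⟨s, hs'⟩).2 : ℕ) < n - s := hab.2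
    rw [chainMap_succ_apply hs', collapse_eq' _ _ _ hab.1]
    have ha := hab.1
    split_ifs with h1 h2 <;> omega

lemma chainMap_surj (hv : ValidSeq n ω) {s : ℕ} (hs : s ≤ n - 1) :
    ∀ y < n - s, ∃ l : Fin n, chainMap n ω s l = y := by
  induction s with
  | zero => exact fun y hy => ⟨⟨y, by omega⟩, by simp [chainMap]⟩
  | succ s ih =>
    intro y hy
    have hs' : s < n - 1 := hs
    have hab := hv ⟨s, hs'⟩
    set a := ((ω ⟨s, hs'⟩).1 : ℕ)
    set b := ((ω ⟨s, hs'⟩).2 : ℕ)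
    obtain ⟨l, hl⟩ := ih (le_of_lt hs') (if b ≤ y then y + 1 else y)
      (by split_ifs <;> omega)
    refine ⟨l, ?_⟩
    rw [chainMap_succ_apply hs', hl, collapse_eq' _ _ _ hab.1]
    split_ifs <;> omega

lemma chainMap_eq_mono {s t : ℕ} (hst : s ≤ t) {l m : Fin n}
    (h : chainMap n ω s l = chainMap n ω s m) :
    chainMap n ω t l = chainMap n ω t m := by
  induction t, hst using Nat.le_induction with
  | base => exact h
  | succ t ht ih =>
    by_cases h1 : t < n - 1
    · rw [chainMap_succ_apply h1, chainMap_succ_apply h1, ih]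
    · simp only [chainMap, dif_neg h1]; exact ih

lemma chainMap_succ_eq_iff (hv : ValidSeq n ω) {s : ℕ} (hs : s < n - 1) {y : ℕ}
    (hy : y < n - s - 1) (ha : y ≠ ((ω ⟨s, hs⟩).1 : ℕ)) (m : Fin n) :
    chainMap n ω (s + 1) m = y ↔
      chainMap n ω s m = (if ((ω ⟨s, hs⟩).2 : ℕ) ≤ y then y + 1 else y) := by
  have hab := hv ⟨s, hs⟩
  set a := ((ω ⟨s, hs⟩).1 : ℕ)
  set b := ((ω ⟨s, hs⟩).2 : ℕ)
  have hx := chainMap_lt hv (le_of_lt hs) m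
  rw [chainMap_succ_apply hs, collapse_eq' _ _ _ hab.1]
  constructor
  · intro h
    split_ifs at h with h1 h2 <;> split_ifs <;> omega
  · intro h
    split_ifs at h with h1 <;> split_ifs <;> omega

end Chain

def stepL (p : ℕ × ℕ) (L : Finset ℕ) : Finset ℕ :=
  ((L.erase p.1).erase p.2).image (fun x => if p.2 < x then x - 1 else x)

def IsOld (n : ℕ) (ω : Fin (n - 1) → Fin n × Fin n) (t0 t y : ℕ) : Prop :=
  ∃ l : Fin n, chainMap n ω t l = y ∧
    ∀ m : Fin n, chainMap n ω t m = y → chainMap n ω t0 m = chainMap n ω t0 l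

noncomputable def OldSet (n : ℕ) (ω : Fin (n - 1) → Fin n × Fin n) (t0 t : ℕ) :
    Finset ℕ :=
  (Finset.range (n - t)).filter (IsOld n ω t0 t)

section StepL

lemma mem_stepL {p : ℕ × ℕ} (hab : p.1 < p.2) {L : Finset ℕ} {y : ℕ} :
    y ∈ stepL p L ↔ y ≠ p.1 ∧ (if p.2 ≤ y then y + 1 else y) ∈ L := by
  simp only [stepL, Finset.mem_image, Finset.mem_erase]
  constructor
  · rintro ⟨x, ⟨hxb, hxa, hxL⟩, rfl⟩
    rcases lt_or_gt_of_ne hxb with h | h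
    · constructor
      · simpa [not_lt.2 h.le] using hxa
      · have : ¬ (p.2 < x) := not_lt.2 h.le
        rw [if_neg this]
        split_ifs with h2
        · omega
        · exact hxL
    · rw [if_pos h]
      constructor
      · omega
      · have : p.2 ≤ x - 1 := by omega
        rw [if_pos this]
        have : x - 1 + 1 = x := by omega
        rw [this]; exact hxL
  · rintro ⟨hya, hyL⟩
    by_cases h : p.2 ≤ y
    · rw [if_pos h] at hyL
      exact ⟨y + 1, ⟨by omega, by omega, hyL⟩,
        by rw [if_pos (show p.2 < y + 1 by omega)]; omega⟩
    · rw [if_neg h] at hyL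
      exact ⟨y, ⟨by omega, hya, hyL⟩, by rw [if_neg (show ¬ p.2 < y by omega)]⟩

lemma card_stepL {p : ℕ × ℕ} (hab : p.1 < p.2) (L : Finset ℕ) :
    (stepL p L).card +
      ((if p.1 ∈ L then 1 else 0) + (if p.2 ∈ L then 1 else 0)) = L.card := by
  have hinj : Set.InjOn (fun x => if p.2 < x then x - 1 else x)
      ((L.erase p.1).erase p.2) := by
    intro x hx x' hx' hxx'
    simp only [Finset.coe_erase, Set.mem_diff, Set.mem_singleton_iff,
      Finset.mem_coe, Finset.mem_erase] at hx hx'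
    simp only at hxx'
    split_ifs at hxx' <;> omega
  have hcard : (stepL p L).card = ((L.erase p.1).erase p.2).card :=
    Finset.card_image_of_injOn hinj
  rw [hcard]
  by_cases h1 : p.1 ∈ L <;> by_cases h2 : p.2 ∈ L
  · rw [Finset.card_erase_of_mem (Finset.mem_erase.2 ⟨hab.ne', h2⟩),
      Finset.card_erase_of_mem h1]
    have : 1 < L.card := Finset.one_lt_card.2 ⟨p.1, h1, p.2, h2, hab.ne⟩
    simp only [if_pos h1, if_pos h2]
    omega
  · rw [Finset.erase_eq_of_notMem (fun hc => h2 (Finset.mem_of_mem_erase hc)),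
      Finset.card_erase_of_mem h1]
    have : 0 < L.card := Finset.card_pos.2 ⟨p.1, h1⟩
    simp only [if_pos h1, if_neg h2]
    omega
  · rw [Finset.erase_eq_of_notMem h1,
      Finset.card_erase_of_mem h2]
    have : 0 < L.card := Finset.card_pos.2 ⟨p.2, h2⟩
    simp only [if_neg h1, if_pos h2]
    omega
  · rw [Finset.erase_eq_of_notMem h1,
      Finset.erase_eq_of_notMem h2]
    simp only [if_neg h1, if_neg h2]
    omega

end StepL

section Old

variable {n : ℕ} {ω : Fin (n - 1) → Fin n × Fin n}

lemma isOld_init (hv : ValidSeq n ω) {t0 y : ℕ} (hy : y < n - t0) (ht0 : t0 ≤ n - 1) :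
    IsOld n ω t0 t0 y := by
  obtain ⟨l, hl⟩ := chainMap_surj hv ht0 y hy
  exact ⟨l, hl, fun m hm => by rw [hm, hl]⟩

lemma oldSet_init (hv : ValidSeq n ω) {t0 : ℕ} (ht0 : t0 ≤ n - 1) :
    OldSet n ω t0 t0 = Finset.range (n - t0) := by
  unfold OldSet
  rw [Finset.filter_eq_self]
  exact fun y hy => isOld_init hv (Finset.mem_range.1 hy) ht0

lemma not_isOld_merged (hv : ValidSeq n ω) {t0 t : ℕ} (ht0 : t0 ≤ t) (ht : t < n - 1) :
    ¬ IsOld n ω t0 (t + 1) ((ω ⟨t, ht⟩).1 : ℕ) := by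
  rintro ⟨l, _, hall⟩
  have hab := hv ⟨t, ht⟩
  set a := ((ω ⟨t, ht⟩).1 : ℕ) with ha
  set b := ((ω ⟨t, ht⟩).2 : ℕ) with hb
  have hbn : b < n - t := hab.2
  obtain ⟨la, hla⟩ := chainMap_surj hv (le_of_lt ht) a (by omega)
  obtain ⟨lb, hlb⟩ := chainMap_surj hv (le_of_lt ht) b (by omega)
  have h1 : chainMap n ω (t + 1) la = a := by
    rw [chainMap_succ_apply ht, hla, collapse_eq' _ _ _ hab.1]
    rw [if_neg (by omega), if_neg (by omega)]
  have h2 : chainMap n ω (t + 1) lb = a := by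
    rw [chainMap_succ_apply ht, hlb, collapse_eq' _ _ _ hab.1]
    rw [if_pos rfl]
  have := (hall la h1).trans (hall lb h2).symm
  have := chainMap_eq_mono ht0 this
  rw [hla, hlb] at this
  omega

lemma isOld_succ_iff (hv : ValidSeq n ω) {t0 t : ℕ} (ht : t < n - 1) {y : ℕ}
    (hy : y < n - t - 1) (ha : y ≠ ((ω ⟨t, ht⟩).1 : ℕ)) :
    IsOld n ω t0 (t + 1) y ↔
      IsOld n ω t0 t (if ((ω ⟨t, ht⟩).2 : ℕ) ≤ y then y + 1 else y) := by
  unfold IsOld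
  simp only [chainMap_succ_eq_iff hv ht hy ha]

lemma oldSet_succ (hv : ValidSeq n ω) {t0 t : ℕ} (ht0 : t0 ≤ t) (ht : t < n - 1) :
    OldSet n ω t0 (t + 1) =
      stepL (((ω ⟨t, ht⟩).1 : ℕ), ((ω ⟨t, ht⟩).2 : ℕ)) (OldSet n ω t0 t) := by
  have hab := hv ⟨t, ht⟩
  have hb : ((ω ⟨t, ht⟩).2 : ℕ) < n - t := hab.2
  ext y
  rw [mem_stepL hab.1]
  simp only [OldSet, Finset.mem_filter, Finset.mem_range]
  constructor
  · rintro ⟨hy, hold⟩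
    have hya : y ≠ ((ω ⟨t, ht⟩).1 : ℕ) := by
      rintro rfl
      exact not_isOld_merged hv ht0 ht hold
    refine ⟨hya, ?_, (isOld_succ_iff hv ht hy hya).1 hold⟩
    split_ifs <;> omega
  · rintro ⟨hya, hu, hold⟩
    have hy : y < n - t - 1 := by
      split_ifs at hu <;> omega
    exact ⟨by omega, (isOld_succ_iff hv ht hy hya).2 hold⟩

end Old

noncomputable def fiber (n : ℕ) (ω : Fin (n - 1) → Fin n × Fin n) (t y : ℕ) :
    Finset (Fin n) :=
  Finset.univ.filter (fun l => chainMap n ω t l = y)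

section Fmat

variable {n : ℕ} {ω : Fin (n - 1) → Fin n × Fin n}

lemma mem_fiber {t y : ℕ} {m : Fin n} : m ∈ fiber n ω t y ↔ chainMap n ω t m = y := by
  simp [fiber]

lemma mem_blocksAt {k : ℕ} {B : Finset (Fin n)} :
    B ∈ blocksAt n ω k ↔ ∃ l : Fin n, blockOf n ω k l = B := by
  simp [blocksAt]

lemma blockOf_eq_fiber {k : ℕ} (l : Fin n) :
    blockOf n ω k l = fiber n ω (n - k) (chainMap n ω (n - k) l) := by
  unfold blockOf fiber
  ext m
  simp

lemma Fmat_card (hv : ValidSeq n ω) {i t : ℕ} (hii : i + 1 ≤ n)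
    (ht0 : n - (i + 1) ≤ t) (ht : t ≤ n - 1) :
    FmatOf n ω i (n - t - 1) = (OldSet n ω (n - (i + 1)) t).card := by
  have hn1 : 1 ≤ n := le_trans (by omega) hii
  have htn : n - t - 1 + 1 = n - t := by omega
  have hnnt : n - (n - t) = t := by omega
  unfold FmatOf
  rw [htn]
  symm
  refine Finset.card_bij (fun y _ => fiber n ω t y) ?_ ?_ ?_
  · intro y hy
    simp only [OldSet, Finset.mem_filter, Finset.mem_range] at hy
    obtain ⟨hylt, l, hl, hall⟩ := hy
    rw [Finset.mem_inter]
    constructor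
    · rw [mem_blocksAt]
      refine ⟨l, ?_⟩
      rw [blockOf_eq_fiber, hnnt, hl]
    · rw [mem_blocksAt]
      refine ⟨l, ?_⟩
      rw [blockOf_eq_fiber]
      ext m
      rw [mem_fiber, mem_fiber]
      constructor
      · intro h
        have := chainMap_eq_mono (t := t) ht0 h
        rw [this, hl]
      · intro h
        exact hall m h
  · intro y hy y' hy' h
    simp only [OldSet, Finset.mem_filter, Finset.mem_range] at hy hy'
    obtain ⟨l, hl, -⟩ := hy.2
    have h1 : l ∈ fiber n ω t y := mem_fiber.2 hl
    rw [h] at h1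
    rw [← hl, mem_fiber.1 h1]
  · intro B hB
    rw [Finset.mem_inter, mem_blocksAt, mem_blocksAt] at hB
    obtain ⟨⟨l, hB1⟩, ⟨m', hB2⟩⟩ := hB
    refine ⟨chainMap n ω t l, ?_, ?_⟩
    · simp only [OldSet, Finset.mem_filter, Finset.mem_range]
      refine ⟨chainMap_lt hv ht l, l, rfl, ?_⟩
      intro m hm
      have hmB : m ∈ B := by
        rw [← hB1, blockOf_eq_fiber, hnnt, mem_fiber]
        exact hm
      have hlB : l ∈ B := by
        rw [← hB1, blockOf_eq_fiber, hnnt, mem_fiber]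
      rw [← hB2, blockOf_eq_fiber] at hmB hlB
      rw [mem_fiber.1 hmB, mem_fiber.1 hlB]
    · show fiber n ω t (chainMap n ω t l) = B
      rw [← hB1, blockOf_eq_fiber, hnnt]
end Fmat

section Dmat

variable {n : ℕ} {ω : Fin (n - 1) → Fin n × Fin n}

lemma Dmat_eq (hv : ValidSeq n ω) {i j : ℕ} (hj : 2 ≤ j) (hji : j ≤ i)
    (hi : i ≤ n - 1) (hn : 2 ≤ n) (s : Fin (n - 1)) (hs : (s : ℕ) = n - 1 - j) :
    DmatOf n ω i j =
      ((if ((ω s).1 : ℕ) ∈ OldSet n ω (n - (i + 1)) (n - 1 - j) then 1 else 0) +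
       (if ((ω s).2 : ℕ) ∈ OldSet n ω (n - (i + 1)) (n - 1 - j) then 1 else 0) : ℕ) := by
  have hii : i + 1 ≤ n := by omega
  set t0 := n - (i + 1) with ht0def
  set t := n - 1 - j with htdef
  have htlt : t < n - 1 := by omega
  have hseq : s = ⟨t, htlt⟩ := Fin.ext hs
  have F1 : FmatOf n ω i j = (OldSet n ω t0 t).card := by
    have hj' : j = n - t - 1 := by omega
    rw [hj']
    exact Fmat_card hv hii (by omega) (by omega)
  have F2 : FmatOf n ω i (j - 1) = (OldSet n ω t0 (t + 1)).card := by
    have hj' : j - 1 = n - (t + 1) - 1 := by omega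
    rw [hj']
    exact Fmat_card hv hii (by omega) (by omega)
  have hsucc := oldSet_succ hv (t0 := t0) (by omega) htlt
  have hab := hv ⟨t, htlt⟩
  have hcard := card_stepL (p := (((ω ⟨t, htlt⟩).1 : ℕ), ((ω ⟨t, htlt⟩).2 : ℕ)))
    hab.1 (OldSet n ω t0 t)
  unfold DmatOf
  rw [F1, F2, hsucc, hseq]
  simp only at hcard
  split_ifs at hcard ⊢ <;> push_cast <;> omega

end Dmat

def pairsAt (n t : ℕ) : Finset (Fin n × Fin n) :=
  Finset.univ.filter (fun p => (p.1 : ℕ) < (p.2 : ℕ) ∧ (p.2 : ℕ) < n - t)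

def evo (n i0 : ℕ) (ω : Fin (n - 1) → Fin n × Fin n) : ℕ → Finset ℕ
  | 0 => Finset.range (i0 + 1)
  | m + 1 =>
      if h : n - 1 - i0 + m < n - 1 then
        stepL (((ω ⟨n - 1 - i0 + m, h⟩).1 : ℕ), ((ω ⟨n - 1 - i0 + m, h⟩).2 : ℕ))
          (evo n i0 ω m)
      else evo n i0 ω m

section Evo

variable {n : ℕ} {ω : Fin (n - 1) → Fin n × Fin n}

lemma mem_pairsAt {t : ℕ} {p : Fin n × Fin n} :
    p ∈ pairsAt n t ↔ (p.1 : ℕ) < (p.2 : ℕ) ∧ (p.2 : ℕ) < n - t := by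
  simp [pairsAt]

lemma mem_coalSpace : ω ∈ coalSpace n ↔ ValidSeq n ω := by
  simp [coalSpace]

lemma coord_mem_pairsAt (hv : ValidSeq n ω) (s : Fin (n - 1)) :
    ω s ∈ pairsAt n (s : ℕ) := mem_pairsAt.2 (hv s)

lemma valid_update (hv : ValidSeq n ω) (s : Fin (n - 1)) {p : Fin n × Fin n}
    (hp : p ∈ pairsAt n (s : ℕ)) : ValidSeq n (Function.update ω s p) := by
  intro s'
  by_cases h : s' = s
  · subst h
    rw [Function.update_self]
    exact mem_pairsAt.1 hp
  · rw [Function.update_of_ne h]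
    exact hv s'

lemma evo_eq_oldSet (hv : ValidSeq n ω) {i0 : ℕ} (hii : i0 + 1 ≤ n) {m : ℕ}
    (hm : n - 1 - i0 + m ≤ n - 1) :
    evo n i0 ω m = OldSet n ω (n - (i0 + 1)) (n - 1 - i0 + m) := by
  induction m with
  | zero =>
    have h1 : n - (i0 + 1) = n - 1 - i0 := by omega
    have h2 : n - (n - 1 - i0) = i0 + 1 := by omega
    rw [evo]
    rw [show n - 1 - i0 + 0 = n - 1 - i0 from rfl, h1, oldSet_init hv (by omega), h2]
  | succ m ih =>
    have h : n - 1 - i0 + m < n - 1 := by omega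
    rw [show n - 1 - i0 + (m + 1) = n - 1 - i0 + m + 1 from by omega,
      oldSet_succ hv (by omega) h, evo, dif_pos h, ih (by omega)]

lemma evo_succ {i0 m : ℕ} (h : n - 1 - i0 + m < n - 1) :
    evo n i0 ω (m + 1) =
      stepL (((ω ⟨n - 1 - i0 + m, h⟩).1 : ℕ), ((ω ⟨n - 1 - i0 + m, h⟩).2 : ℕ))
        (evo n i0 ω m) := by
  rw [evo, dif_pos h]

lemma evo_update {i0 m : ℕ} (s : Fin (n - 1)) (hs : n - 1 - i0 + m ≤ (s : ℕ))
    (p : Fin n × Fin n) : evo n i0 (Function.update ω s p) m = evo n i0 ω m := by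
  induction m with
  | zero => rfl
  | succ m ih =>
    have ih' := ih (by omega)
    rw [evo, evo]
    split_ifs with h
    · rw [ih', Function.update_of_ne
        (Fin.ne_of_val_ne (show n - 1 - i0 + m ≠ (s : ℕ) by omega))]
    · exact ih'

lemma resample {i0 : ℕ} (m : ℕ) (s : Fin (n - 1)) (hs : (s : ℕ) = n - 1 - i0 + m)
    (g : Fin n × Fin n → Finset ℕ → ℝ) :
    ((pairsAt n (s : ℕ)).card : ℝ) * ∑ ω ∈ coalSpace n, g (ω s) (evo n i0 ω m) =
      ∑ ω ∈ coalSpace n, ∑ p ∈ pairsAt n (s : ℕ), g p (evo n i0 ω m) := by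
  have maps : ∀ ω ∈ coalSpace n, ω s ∈ pairsAt n (s : ℕ) := fun ω hω =>
    coord_mem_pairsAt (mem_coalSpace.1 hω) s
  have key : ∀ p ∈ pairsAt n (s : ℕ), ∀ q ∈ pairsAt n (s : ℕ),
      ∑ ω ∈ (coalSpace n).filter (fun ω => ω s = q), g p (evo n i0 ω m) =
      ∑ ω ∈ (coalSpace n).filter (fun ω => ω s = p), g p (evo n i0 ω m) := by
    intro p hp q hq
    refine Finset.sum_nbij' (fun ω => Function.update ω s p)
      (fun ω => Function.update ω s q) ?_ ?_ ?_ ?_ ?_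
    · intro ω hω
      rw [Finset.mem_filter] at hω ⊢
      exact ⟨mem_coalSpace.2 (valid_update (mem_coalSpace.1 hω.1) s hp),
        Function.update_self _ _ _⟩
    · intro ω hω
      rw [Finset.mem_filter] at hω ⊢
      exact ⟨mem_coalSpace.2 (valid_update (mem_coalSpace.1 hω.1) s hq),
        Function.update_self _ _ _⟩
    · intro ω hω
      rw [Finset.mem_filter] at hω
      rw [Function.update_idem, ← hω.2, Function.update_eq_self]
    · intro ω hω
      rw [Finset.mem_filter] at hω
      rw [Function.update_idem, ← hω.2, Function.update_eq_self]
    · intro ω hω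
      rw [evo_update s (by omega) p]
  have fiber_eq : ∀ (F : (Fin (n - 1) → Fin n × Fin n) → ℝ),
      ∑ ω ∈ coalSpace n, F ω =
        ∑ p ∈ pairsAt n (s : ℕ), ∑ ω ∈ (coalSpace n).filter (fun ω => ω s = p), F ω :=
    fun F => (Finset.sum_fiberwise_of_maps_to maps F).symm
  rw [fiber_eq (fun ω => g (ω s) (evo n i0 ω m))]
  have hRHS : ∑ ω ∈ coalSpace n, ∑ p ∈ pairsAt n (s : ℕ), g p (evo n i0 ω m) =
      ∑ p ∈ pairsAt n (s : ℕ), ∑ ω ∈ coalSpace n, g p (evo n i0 ω m) :=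
    Finset.sum_comm
  rw [hRHS, Finset.mul_sum]
  refine Finset.sum_congr rfl ?_
  intro p hp
  have inner1 : ∑ ω ∈ (coalSpace n).filter (fun ω => ω s = p), g (ω s) (evo n i0 ω m) =
      ∑ ω ∈ (coalSpace n).filter (fun ω => ω s = p), g p (evo n i0 ω m) := by
    refine Finset.sum_congr rfl ?_
    intro ω hω
    rw [(Finset.mem_filter.1 hω).2]
  rw [inner1, fiber_eq (fun ω => g p (evo n i0 ω m))]
  rw [Finset.sum_congr rfl (fun q hq => key p hp q hq), Finset.sum_const,
    nsmul_eq_mul]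

end Evo

noncomputable def eIn {n : ℕ} (L : Finset ℕ) (p : Fin n × Fin n) : ℕ :=
  (if (p.1 : ℕ) ∈ L then 1 else 0) + (if (p.2 : ℕ) ∈ L then 1 else 0)

section Counting

lemma two_mul_choose_two (m : ℕ) : 2 * m.choose 2 = m * (m - 1) := by
  rcases m with _ | k
  · rfl
  · rw [Nat.choose_two_right, Nat.succ_sub_one]
    refine Nat.mul_div_cancel' ?_
    have := Nat.even_mul_succ_self k
    rw [mul_comm] at this
    exact this.two_dvd

lemma card_product_lt {α : Type*} [LinearOrder α] [DecidableEq α] (S : Finset α) :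
    ((S ×ˢ S).filter (fun p => p.1 < p.2)).card = S.card.choose 2 := by
  have hswap : ((S ×ˢ S).filter (fun p => p.1 < p.2)).card
      = ((S ×ˢ S).filter (fun p => p.2 < p.1)).card := by
    apply Finset.card_bij (fun p _ => Prod.swap p)
    · intro p hp
      simp only [Finset.mem_filter, Finset.mem_product] at hp ⊢
      exact ⟨⟨hp.1.2, hp.1.1⟩, hp.2⟩
    · intro p _ q _ h
      exact Prod.swap_injective h
    · intro p hp
      simp only [Finset.mem_filter, Finset.mem_product] at hp
      refine ⟨Prod.swap p, ?_, by simp⟩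
      simp only [Finset.mem_filter, Finset.mem_product]
      exact ⟨⟨hp.1.2, hp.1.1⟩, hp.2⟩
  have h1 : (S.offDiag.filter (fun p => p.1 < p.2)).card
      + (S.offDiag.filter (fun p => ¬ p.1 < p.2)).card = S.offDiag.card :=
    Finset.card_filter_add_card_filter_not _
  have e1 : S.offDiag.filter (fun p => p.1 < p.2)
      = (S ×ˢ S).filter (fun p => p.1 < p.2) := by
    ext p
    simp only [Finset.mem_filter, Finset.mem_offDiag, Finset.mem_product]
    constructor
    · rintro ⟨⟨ha, hb, _⟩, hlt⟩
      exact ⟨⟨ha, hb⟩, hlt⟩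
    · rintro ⟨⟨ha, hb⟩, hlt⟩
      exact ⟨⟨ha, hb, ne_of_lt hlt⟩, hlt⟩
  have e2 : S.offDiag.filter (fun p => ¬ p.1 < p.2)
      = (S ×ˢ S).filter (fun p => p.2 < p.1) := by
    ext p
    simp only [Finset.mem_filter, Finset.mem_offDiag, Finset.mem_product]
    constructor
    · rintro ⟨⟨ha, hb, hne⟩, hlt⟩
      exact ⟨⟨ha, hb⟩, lt_of_le_of_ne (not_lt.1 hlt) (Ne.symm hne)⟩
    · rintro ⟨⟨ha, hb⟩, hlt⟩
      exact ⟨⟨ha, hb, ne_of_gt hlt⟩, not_lt.2 (le_of_lt hlt)⟩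
  rw [e1, e2, ← hswap] at h1
  have h2 := Finset.offDiag_card S
  have h3 := two_mul_choose_two S.card
  have h4 : S.card * (S.card - 1) = S.card * S.card - S.card := by
    rcases S.card with _ | k
    · rfl
    · rw [Nat.succ_sub_one, Nat.mul_succ]
      omega
  omega

lemma pairs_count {n t : ℕ} {L : Finset ℕ} (hL : L ⊆ Finset.range (n - t)) :
    ((pairsAt n t).filter (fun p => (p.1 : ℕ) ∈ L ∧ (p.2 : ℕ) ∈ L)).card
      = L.card.choose 2 := by
  classical
  set S : Finset (Fin n) := Finset.univ.filter (fun x => (x : ℕ) ∈ L) with hS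
  have hSL : S.card = L.card := by
    refine Finset.card_bij (fun x _ => (x : ℕ)) ?_ ?_ ?_
    · intro x hx
      simpa [hS] using hx
    · intro x _ y _ h
      exact Fin.val_injective h
    · intro y hy
      have hyn : y < n := lt_of_lt_of_le (Finset.mem_range.1 (hL hy)) (Nat.sub_le n t)
      exact ⟨⟨y, hyn⟩, by simp [hS, hy], rfl⟩
  have hEq : (pairsAt n t).filter (fun p => (p.1 : ℕ) ∈ L ∧ (p.2 : ℕ) ∈ L)
      = (S ×ˢ S).filter (fun p => p.1 < p.2) := by
    ext p
    simp only [pairsAt, Finset.mem_filter, Finset.mem_univ, true_and,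
      Finset.mem_product, hS]
    constructor
    · rintro ⟨⟨h1, _⟩, hL1, hL2⟩
      exact ⟨⟨hL1, hL2⟩, by rwa [Fin.lt_def]⟩
    · rintro ⟨⟨h1, h2⟩, hlt⟩
      have hb : (p.2 : ℕ) < n - t := Finset.mem_range.1 (hL h2)
      exact ⟨⟨Fin.lt_def.1 hlt, hb⟩, h1, h2⟩
  rw [hEq, ← hSL]
  exact card_product_lt S

lemma card_pairsAt {n t : ℕ} : (pairsAt n t).card = (n - t).choose 2 := by
  have h := pairs_count (n := n) (t := t) (L := Finset.range (n - t)) subset_rfl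
  rw [Finset.card_range] at h
  rw [← h]
  congr 1
  symm
  rw [Finset.filter_eq_self]
  intro p hp
  have := (Finset.mem_filter.1 hp).2
  simp only [Finset.mem_range]
  omega

end Counting

section SumId

variable {n t : ℕ} {L : Finset ℕ}

lemma eIn_le_two {p : Fin n × Fin n} : eIn L p ≤ 2 := by
  unfold eIn; split_ifs <;> omega

lemma sum_decomp {α : Type*} (s : Finset α) (e : α → ℕ) (he : ∀ a ∈ s, e a ≤ 2)
    (f : ℕ → ℝ) :
    ∑ a ∈ s, f (e a) =
      ((s.filter (fun a => e a = 2)).card : ℝ) * f 2 +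
      ((s.filter (fun a => e a = 1)).card : ℝ) * f 1 +
      ((s.filter (fun a => e a = 0)).card : ℝ) * f 0 := by
  classical
  rw [← Finset.sum_filter_add_sum_filter_not s (fun a => e a = 2)]
  rw [← Finset.sum_filter_add_sum_filter_not (s.filter (fun a => ¬ e a = 2))
    (fun a => e a = 1)]
  rw [Finset.filter_filter, Finset.filter_filter]
  have e1 : s.filter (fun a => ¬e a = 2 ∧ e a = 1) = s.filter (fun a => e a = 1) :=
    Finset.filter_congr (fun a _ => by constructor <;> (intro h; omega))
  have e0 : s.filter (fun a => ¬e a = 2 ∧ ¬e a = 1) = s.filter (fun a => e a = 0) :=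
    Finset.filter_congr (fun a ha => by have := he a ha; constructor <;> (intro h; omega))
  rw [e1, e0]
  have c2 : ∑ a ∈ s.filter (fun a => e a = 2), f (e a)
      = ((s.filter (fun a => e a = 2)).card : ℝ) * f 2 := by
    rw [Finset.sum_congr rfl (fun a ha => by rw [(Finset.mem_filter.1 ha).2]),
      Finset.sum_const, nsmul_eq_mul]
  have c1 : ∑ a ∈ s.filter (fun a => e a = 1), f (e a)
      = ((s.filter (fun a => e a = 1)).card : ℝ) * f 1 := by
    rw [Finset.sum_congr rfl (fun a ha => by rw [(Finset.mem_filter.1 ha).2]),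
      Finset.sum_const, nsmul_eq_mul]
  have c0 : ∑ a ∈ s.filter (fun a => e a = 0), f (e a)
      = ((s.filter (fun a => e a = 0)).card : ℝ) * f 0 := by
    rw [Finset.sum_congr rfl (fun a ha => by rw [(Finset.mem_filter.1 ha).2]),
      Finset.sum_const, nsmul_eq_mul]
  rw [c2, c1, c0]
  ring

lemma count_e2 (hL : L ⊆ Finset.range (n - t)) :
    ((pairsAt n t).filter (fun p => eIn L p = 2)).card = L.card.choose 2 := by
  rw [show (pairsAt n t).filter (fun p => eIn L p = 2)
      = (pairsAt n t).filter (fun p => (p.1 : ℕ) ∈ L ∧ (p.2 : ℕ) ∈ L) from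
    Finset.filter_congr (fun p _ => by
      by_cases h1 : (p.1 : ℕ) ∈ L <;> by_cases h2 : (p.2 : ℕ) ∈ L <;>
        simp [eIn, h1, h2])]
  exact pairs_count hL

lemma count_e0 (hL : L ⊆ Finset.range (n - t)) :
    ((pairsAt n t).filter (fun p => eIn L p = 0)).card = (n - t - L.card).choose 2 := by
  have hsub : Finset.range (n - t) \ L ⊆ Finset.range (n - t) := Finset.sdiff_subset
  have hcard : (Finset.range (n - t) \ L).card = n - t - L.card := by
    rw [Finset.card_sdiff_of_subset hL, Finset.card_range]
  rw [show (pairsAt n t).filter (fun p => eIn L p = 0)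
      = (pairsAt n t).filter (fun p =>
          (p.1 : ℕ) ∈ Finset.range (n - t) \ L ∧ (p.2 : ℕ) ∈ Finset.range (n - t) \ L) from
    Finset.filter_congr (fun p hp => by
      have hpm := (Finset.mem_filter.1 hp).2
      have hp1 : (p.1 : ℕ) < n - t := by omega
      have hp2 : (p.2 : ℕ) < n - t := by omega
      by_cases h1 : (p.1 : ℕ) ∈ L <;> by_cases h2 : (p.2 : ℕ) ∈ L <;>
        simp [eIn, h1, h2, Finset.mem_sdiff, Finset.mem_range, hp1, hp2])]
  rw [pairs_count hsub, hcard]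

lemma count_e1_cast (hL : L ⊆ Finset.range (n - t)) :
    (((pairsAt n t).filter (fun p => eIn L p = 1)).card : ℝ) =
      ((n - t).choose 2 : ℝ) - (L.card.choose 2 : ℝ) - ((n - t - L.card).choose 2 : ℝ) := by
  have h2 := Finset.card_filter_add_card_filter_not
    (s := pairsAt n t) (p := fun p => eIn L p = 2)
  have h1 := Finset.card_filter_add_card_filter_not
    (s := (pairsAt n t).filter (fun p => ¬ eIn L p = 2)) (p := fun p => eIn L p = 1)
  rw [Finset.filter_filter, Finset.filter_filter] at h1
  have e1 : (pairsAt n t).filter (fun p => ¬eIn L p = 2 ∧ eIn L p = 1)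
      = (pairsAt n t).filter (fun p => eIn L p = 1) :=
    Finset.filter_congr (fun p _ => by constructor <;> (intro h; omega))
  have e0 : (pairsAt n t).filter (fun p => ¬eIn L p = 2 ∧ ¬eIn L p = 1)
      = (pairsAt n t).filter (fun p => eIn L p = 0) :=
    Finset.filter_congr (fun p _ => by
      have : eIn L p ≤ 2 := eIn_le_two
      constructor <;> (intro h; omega))
  rw [e1, e0] at h1
  have := count_e2 hL
  have := count_e0 hL
  have := card_pairsAt (n := n) (t := t)
  have hsum : L.card.choose 2 + ((pairsAt n t).filter (fun p => eIn L p = 1)).card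
      + (n - t - L.card).choose 2 = (n - t).choose 2 := by omega
  push_cast [← hsum]
  ring

lemma card_le_K (hL : L ⊆ Finset.range (n - t)) : L.card ≤ n - t := by
  have := Finset.card_le_card hL
  simpa using this

lemma sum_eIn_cast (hL : L ⊆ Finset.range (n - t)) :
    ∑ p ∈ pairsAt n t, (eIn L p : ℝ) =
      (L.card : ℝ) * (((n - t : ℕ) : ℝ) - 1) := by
  have := sum_decomp (pairsAt n t) (eIn L) (fun a _ => eIn_le_two) (fun d => (d : ℝ))
  rw [this, count_e1_cast hL, count_e2 hL, count_e0 hL]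
  have hmK := card_le_K hL
  rw [Nat.cast_choose_two, Nat.cast_choose_two, Nat.cast_choose_two,
    Nat.cast_sub hmK]
  push_cast
  ring

lemma sum_stepL_card_cast (hL : L ⊆ Finset.range (n - t)) :
    ∑ p ∈ pairsAt n t, ((stepL ((p.1 : ℕ), (p.2 : ℕ)) L).card : ℝ) =
      (L.card : ℝ) * ((((n - t : ℕ) : ℝ) - 1) * (((n - t : ℕ) : ℝ) - 2) / 2) := by
  have hpt : ∀ p ∈ pairsAt n t,
      ((stepL ((p.1 : ℕ), (p.2 : ℕ)) L).card : ℝ) = (L.card : ℝ) - (eIn L p : ℝ) := by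
    intro p hp
    have hab : (p.1 : ℕ) < (p.2 : ℕ) := ((Finset.mem_filter.1 hp).2).1
    have := card_stepL (p := ((p.1 : ℕ), (p.2 : ℕ))) hab L
    simp only [eIn]
    push_cast [← this]
    ring
  rw [Finset.sum_congr rfl hpt, Finset.sum_sub_distrib, Finset.sum_const,
    nsmul_eq_mul, sum_eIn_cast hL, card_pairsAt, Nat.cast_choose_two]
  ring

lemma sum_stepL_choose_cast (hL : L ⊆ Finset.range (n - t)) :
    ∑ p ∈ pairsAt n t, (((stepL ((p.1 : ℕ), (p.2 : ℕ)) L).card.choose 2 : ℕ) : ℝ) =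
      (L.card.choose 2 : ℝ) * ((((n - t : ℕ) : ℝ) - 2) * (((n - t : ℕ) : ℝ) - 3) / 2) := by
  have hpt : ∀ p ∈ pairsAt n t,
      (((stepL ((p.1 : ℕ), (p.2 : ℕ)) L).card.choose 2 : ℕ) : ℝ)
        = (fun d => (((L.card - d : ℕ).choose 2 : ℕ) : ℝ)) (eIn L p) := by
    intro p hp
    have hab : (p.1 : ℕ) < (p.2 : ℕ) := ((Finset.mem_filter.1 hp).2).1
    have hst := card_stepL (p := ((p.1 : ℕ), (p.2 : ℕ))) hab L
    have : (stepL ((p.1 : ℕ), (p.2 : ℕ)) L).card = L.card - eIn L p := by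
      simp only [eIn]
      dsimp only at hst
      omega
    rw [this]
  have hdec := sum_decomp (pairsAt n t) (eIn L) (fun a _ => eIn_le_two)
    (fun d => (((L.card - d : ℕ).choose 2 : ℕ) : ℝ))
  rw [Finset.sum_congr rfl hpt, hdec, count_e2 hL,
    count_e0 hL, count_e1_cast hL]
  rcases Nat.lt_or_ge L.card 2 with hm | hm
  · have z2 : (L.card - 2).choose 2 = 0 := Nat.choose_eq_zero_of_lt (by omega)
    have z1 : (L.card - 1).choose 2 = 0 := Nat.choose_eq_zero_of_lt (by omega)
    have z0 : (L.card - 0).choose 2 = 0 := Nat.choose_eq_zero_of_lt (by omega)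
    have zm : L.card.choose 2 = 0 := Nat.choose_eq_zero_of_lt (by omega)
    simp [z2, z1, z0, zm]
  · have hmK := card_le_K hL
    rw [Nat.cast_choose_two, Nat.cast_choose_two, Nat.cast_choose_two,
      Nat.cast_choose_two, Nat.cast_choose_two, Nat.cast_choose_two,
      Nat.cast_sub hmK, Nat.cast_sub (by omega : 2 ≤ L.card),
      Nat.cast_sub (by omega : 1 ≤ L.card), Nat.sub_zero]
    push_cast
    ring

end SumId

section Recursion

variable {n : ℕ}

lemma evo_subset {i : ℕ} {ω : Fin (n - 1) → Fin n × Fin n} (hv : ValidSeq n ω)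
    (hii : i + 1 ≤ n) {m : ℕ} (hm : n - 1 - i + m ≤ n - 1) :
    evo n i ω m ⊆ Finset.range (n - (n - 1 - i + m)) := by
  rw [evo_eq_oldSet hv hii hm]
  exact Finset.filter_subset _ _

lemma step_sum {i : ℕ} (m : ℕ) (s : Fin (n - 1)) (hs : (s : ℕ) = n - 1 - i + m)
    (F : Finset ℕ → ℝ) (c : ℝ)
    (hF : ∀ ω ∈ coalSpace n,
      ∑ p ∈ pairsAt n (s : ℕ), F (stepL ((p.1 : ℕ), (p.2 : ℕ)) (evo n i ω m))
        = F (evo n i ω m) * c) :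
    ((pairsAt n (s : ℕ)).card : ℝ) * ∑ ω ∈ coalSpace n, F (evo n i ω (m + 1))
      = c * ∑ ω ∈ coalSpace n, F (evo n i ω m) := by
  have hres := resample (n := n) (i0 := i) m s hs
    (fun p A => F (stepL ((p.1 : ℕ), (p.2 : ℕ)) A))
  have h' : n - 1 - i + m < n - 1 := hs ▸ s.isLt
  have hseq : s = ⟨n - 1 - i + m, h'⟩ := Fin.ext hs
  have hL : ∀ ω ∈ coalSpace n,
      F (stepL (((ω s).1 : ℕ), ((ω s).2 : ℕ)) (evo n i ω m)) = F (evo n i ω (m + 1)) := by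
    intro ω _
    rw [evo_succ h', ← hseq]
  calc ((pairsAt n (s : ℕ)).card : ℝ) * ∑ ω ∈ coalSpace n, F (evo n i ω (m + 1))
      = ((pairsAt n (s : ℕ)).card : ℝ) *
          ∑ ω ∈ coalSpace n, F (stepL (((ω s).1 : ℕ), ((ω s).2 : ℕ)) (evo n i ω m)) := by
        rw [Finset.sum_congr rfl hL]
    _ = ∑ ω ∈ coalSpace n, ∑ p ∈ pairsAt n (s : ℕ),
          F (stepL ((p.1 : ℕ), (p.2 : ℕ)) (evo n i ω m)) := hres
    _ = ∑ ω ∈ coalSpace n, F (evo n i ω m) * c := Finset.sum_congr rfl hF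
    _ = c * ∑ ω ∈ coalSpace n, F (evo n i ω m) := by
        rw [← Finset.sum_mul, mul_comm]

lemma SC_closed {i j : ℕ} (hn : 2 ≤ n) (hj : 2 ≤ j) (hji : j ≤ i) (hi : i ≤ n - 1) :
    ∀ m ≤ i - j,
      (∑ ω ∈ coalSpace n, ((evo n i ω m).card.choose 2 : ℝ)) *
          ((i.choose 2 : ℝ) * ((i + 1).choose 2 : ℝ))
        = ((coalSpace n).card : ℝ) * ((i + 1).choose 2 : ℝ) *
          (((i - m).choose 2 : ℝ) * ((i + 1 - m).choose 2 : ℝ)) := by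
  have hii : i + 1 ≤ n := by omega
  intro m
  induction m with
  | zero =>
    intro _
    have h0 : ∀ ω ∈ coalSpace n, ((evo n i ω 0).card.choose 2 : ℝ)
        = ((i + 1).choose 2 : ℝ) := by
      intro ω _
      rw [show evo n i ω 0 = Finset.range (i + 1) from rfl, Finset.card_range]
    rw [Finset.sum_congr rfl h0, Finset.sum_const, nsmul_eq_mul]
    simp only [Nat.sub_zero]
  | succ m ih =>
    intro hm1
    have hm : m ≤ i - j := by omega
    have ihm := ih hm
    have htm : n - 1 - i + m < n - 1 := by omega
    set s : Fin (n - 1) := ⟨n - 1 - i + m, htm⟩ with hsdef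
    have hsval : (s : ℕ) = n - 1 - i + m := rfl
    have hnts : n - (s : ℕ) = i + 1 - m := by
      rw [hsval]; omega
    have hc : (((i - 1 - m).choose 2 : ℕ) : ℝ) =
        ((((i + 1 - m : ℕ) : ℝ)) - 2) * ((((i + 1 - m : ℕ) : ℝ)) - 3) / 2 := by
      rw [Nat.cast_choose_two,
        Nat.cast_sub (show m ≤ i - 1 by omega),
        Nat.cast_sub (show 1 ≤ i by omega),
        Nat.cast_sub (show m ≤ i + 1 by omega)]
      push_cast
      ring
    have hF : ∀ ω ∈ coalSpace n,
        ∑ p ∈ pairsAt n (s : ℕ),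
            (((stepL ((p.1 : ℕ), (p.2 : ℕ)) (evo n i ω m)).card.choose 2 : ℕ) : ℝ)
          = (((evo n i ω m).card.choose 2 : ℕ) : ℝ) *
              (((i - 1 - m).choose 2 : ℕ) : ℝ) := by
      intro ω hω
      have hsub := evo_subset (mem_coalSpace.1 hω) hii (show n - 1 - i + m ≤ n - 1 by omega)
      have := sum_stepL_choose_cast (n := n) (t := (s : ℕ)) (L := evo n i ω m) hsub
      rw [this, hnts, hc]
    have hst := step_sum m s hsval (fun A => ((A.card.choose 2 : ℕ) : ℝ))
      (((i - 1 - m).choose 2 : ℕ) : ℝ) hF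
    rw [card_pairsAt, hnts] at hst
    have hA : (((i + 1 - m).choose 2 : ℕ) : ℝ) ≠ 0 := by
      have : 0 < (i + 1 - m).choose 2 := Nat.choose_pos (by omega)
      positivity
    have e1 : i - (m + 1) = i - 1 - m := by omega
    have e2 : i + 1 - (m + 1) = i - m := by omega
    rw [e1, e2]
    apply mul_left_cancel₀ hA
    calc (((i + 1 - m).choose 2 : ℕ) : ℝ) *
          ((∑ ω ∈ coalSpace n, ((evo n i ω (m + 1)).card.choose 2 : ℝ)) *
            ((i.choose 2 : ℝ) * ((i + 1).choose 2 : ℝ)))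
        = ((((i + 1 - m).choose 2 : ℕ) : ℝ) *
            ∑ ω ∈ coalSpace n, ((evo n i ω (m + 1)).card.choose 2 : ℝ)) *
            ((i.choose 2 : ℝ) * ((i + 1).choose 2 : ℝ)) := by ring
      _ = ((((i - 1 - m).choose 2 : ℕ) : ℝ) *
            ∑ ω ∈ coalSpace n, ((evo n i ω m).card.choose 2 : ℝ)) *
            ((i.choose 2 : ℝ) * ((i + 1).choose 2 : ℝ)) := by rw [hst]
      _ = (((i - 1 - m).choose 2 : ℕ) : ℝ) *
            ((∑ ω ∈ coalSpace n, ((evo n i ω m).card.choose 2 : ℝ)) *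
              ((i.choose 2 : ℝ) * ((i + 1).choose 2 : ℝ))) := by ring
      _ = (((i - 1 - m).choose 2 : ℕ) : ℝ) *
            (((coalSpace n).card : ℝ) * ((i + 1).choose 2 : ℝ) *
              (((i - m).choose 2 : ℝ) * ((i + 1 - m).choose 2 : ℝ))) := by rw [ihm]
      _ = (((i + 1 - m).choose 2 : ℕ) : ℝ) *
            (((coalSpace n).card : ℝ) * ((i + 1).choose 2 : ℝ) *
              (((i - 1 - m).choose 2 : ℝ) * ((i - m).choose 2 : ℝ))) := by ring

lemma SM_closed {i j : ℕ} (hn : 2 ≤ n) (hj : 2 ≤ j) (hji : j ≤ i) (hi : i ≤ n - 1) :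
    ∀ m ≤ i - j,
      (∑ ω ∈ coalSpace n, ((evo n i ω m).card : ℝ)) * (((i + 1).choose 2 : ℕ) : ℝ)
        = ((coalSpace n).card : ℝ) * ((i : ℝ) + 1) * (((i + 1 - m).choose 2 : ℕ) : ℝ) := by
  have hii : i + 1 ≤ n := by omega
  intro m
  induction m with
  | zero =>
    intro _
    have h0 : ∀ ω ∈ coalSpace n, ((evo n i ω 0).card : ℝ) = ((i : ℝ) + 1) := by
      intro ω _
      rw [show evo n i ω 0 = Finset.range (i + 1) from rfl, Finset.card_range]
      push_cast
      ring
    rw [Finset.sum_congr rfl h0, Finset.sum_const, nsmul_eq_mul]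
    simp only [Nat.sub_zero]
  | succ m ih =>
    intro hm1
    have ihm := ih (by omega)
    have htm : n - 1 - i + m < n - 1 := by omega
    set s : Fin (n - 1) := ⟨n - 1 - i + m, htm⟩ with hsdef
    have hsval : (s : ℕ) = n - 1 - i + m := rfl
    have hnts : n - (s : ℕ) = i + 1 - m := by
      rw [hsval]; omega
    have hc : (((i - m).choose 2 : ℕ) : ℝ) =
        ((((i + 1 - m : ℕ) : ℝ)) - 1) * ((((i + 1 - m : ℕ) : ℝ)) - 2) / 2 := by
      rw [Nat.cast_choose_two,
        Nat.cast_sub (show m ≤ i by omega),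
        Nat.cast_sub (show m ≤ i + 1 by omega)]
      push_cast
      ring
    have hF : ∀ ω ∈ coalSpace n,
        ∑ p ∈ pairsAt n (s : ℕ),
            (((stepL ((p.1 : ℕ), (p.2 : ℕ)) (evo n i ω m)).card : ℕ) : ℝ)
          = (((evo n i ω m).card : ℕ) : ℝ) * (((i - m).choose 2 : ℕ) : ℝ) := by
      intro ω hω
      have hsub := evo_subset (mem_coalSpace.1 hω) hii (show n - 1 - i + m ≤ n - 1 by omega)
      have := sum_stepL_card_cast (n := n) (t := (s : ℕ)) (L := evo n i ω m) hsub
      rw [this, hnts, hc]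
    have hst := step_sum m s hsval (fun A => ((A.card : ℕ) : ℝ))
      (((i - m).choose 2 : ℕ) : ℝ) hF
    rw [card_pairsAt, hnts] at hst
    have hA : (((i + 1 - m).choose 2 : ℕ) : ℝ) ≠ 0 := by
      have : 0 < (i + 1 - m).choose 2 := Nat.choose_pos (by omega)
      positivity
    have e2 : i + 1 - (m + 1) = i - m := by omega
    rw [e2]
    apply mul_left_cancel₀ hA
    calc (((i + 1 - m).choose 2 : ℕ) : ℝ) *
          ((∑ ω ∈ coalSpace n, ((evo n i ω (m + 1)).card : ℝ)) * (((i + 1).choose 2 : ℕ) : ℝ))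
        = ((((i + 1 - m).choose 2 : ℕ) : ℝ) *
            ∑ ω ∈ coalSpace n, ((evo n i ω (m + 1)).card : ℝ)) * (((i + 1).choose 2 : ℕ) : ℝ) := by
          ring
      _ = ((((i - m).choose 2 : ℕ) : ℝ) *
            ∑ ω ∈ coalSpace n, ((evo n i ω m).card : ℝ)) * (((i + 1).choose 2 : ℕ) : ℝ) := by
          rw [hst]
      _ = (((i - m).choose 2 : ℕ) : ℝ) *
            ((∑ ω ∈ coalSpace n, ((evo n i ω m).card : ℝ)) * (((i + 1).choose 2 : ℕ) : ℝ)) := by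
          ring
      _ = (((i - m).choose 2 : ℕ) : ℝ) *
            (((coalSpace n).card : ℝ) * ((i : ℝ) + 1) * (((i + 1 - m).choose 2 : ℕ) : ℝ)) := by
          rw [ihm]
      _ = (((i + 1 - m).choose 2 : ℕ) : ℝ) *
            (((coalSpace n).card : ℝ) * ((i : ℝ) + 1) * (((i - m).choose 2 : ℕ) : ℝ)) := by
          ring

end Recursion


lemma coalSpace_nonempty {n : ℕ} (hn : 2 ≤ n) : (coalSpace n).Nonempty := by
  refine ⟨fun s => (⟨0, by omega⟩, ⟨1, by omega⟩), ?_⟩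
  rw [mem_coalSpace]
  intro s
  have hs := s.isLt
  exact ⟨by simp, by simp; omega⟩

lemma card_filter_eq_of_iff {α : Type*} {s : Finset α} {p q : α → Prop}
    [DecidablePred p] [DecidablePred q] (h : ∀ a ∈ s, p a ↔ q a) :
    (s.filter p).card = (s.filter q).card := by
  refine Finset.card_bij (fun a _ => a) ?_ ?_ ?_
  · intro a ha
    rw [Finset.mem_filter] at ha ⊢
    exact ⟨ha.1, (h a ha.1).1 ha.2⟩
  · intro a _ b _ hab
    exact hab
  · intro b hb
    rw [Finset.mem_filter] at hb
    exact ⟨b, Finset.mem_filter.2 ⟨hb.1, (h b hb.1).2 hb.2⟩, rfl⟩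


/-- Under the Yule model, for `1 < j ≤ i ≤ n-1`:
`P(D_{ij} = 2) = j(j-1)/(i(i-1))`, `P(D_{ij} = 1) = 2j(i-j)/(i(i-1))`,
`P(D_{ij} = 0) = (i-j)(i-j-1)/(i(i-1))`, and hence `E[D_{ij}] = 2j/i`. -/
theorem yule_dmat_distribution (n i j : ℕ) (hn : 2 ≤ n)
    (hj : 1 < j) (hji : j ≤ i) (hi : i ≤ n - 1) :
    coalP n (fun ω => DmatOf n ω i j = 2) =
      (j : ℝ) * ((j : ℝ) - 1) / ((i : ℝ) * ((i : ℝ) - 1)) ∧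
    coalP n (fun ω => DmatOf n ω i j = 1) =
      2 * (j : ℝ) * ((i : ℝ) - (j : ℝ)) / ((i : ℝ) * ((i : ℝ) - 1)) ∧
    coalP n (fun ω => DmatOf n ω i j = 0) =
      ((i : ℝ) - (j : ℝ)) * ((i : ℝ) - (j : ℝ) - 1) / ((i : ℝ) * ((i : ℝ) - 1)) ∧
    coalE n (fun ω => (DmatOf n ω i j : ℝ)) = 2 * (j : ℝ) / (i : ℝ) := by
  classical
  have hj2 : 2 ≤ j := hj
  have hii : i + 1 ≤ n := by omega
  have hi2 : 2 ≤ i := le_trans hj2 hji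
  set m' := i - j with hm'def
  have hsval0 : n - 1 - j < n - 1 := by omega
  set s : Fin (n - 1) := ⟨n - 1 - j, hsval0⟩ with hsdef
  have hsval : (s : ℕ) = n - 1 - i + m' := by
    show n - 1 - j = n - 1 - i + m'
    omega
  have hnts : n - (s : ℕ) = j + 1 := by
    show n - (n - 1 - j) = j + 1
    omega
  set N := (coalSpace n).card with hNdef
  have hNpos : 0 < N := Finset.card_pos.2 (coalSpace_nonempty hn)
  have hNne : (N : ℝ) ≠ 0 := Nat.cast_ne_zero.2 (by omega)
  have hev : ∀ ω ∈ coalSpace n,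
      OldSet n ω (n - (i + 1)) (n - 1 - j) = evo n i ω m' := by
    intro ω hω
    rw [evo_eq_oldSet (mem_coalSpace.1 hω) hii (show n - 1 - i + m' ≤ n - 1 by omega)]
    rw [show n - 1 - i + m' = n - 1 - j by omega]
  have hDe : ∀ ω ∈ coalSpace n, ∀ d : ℕ,
      (DmatOf n ω i j = (d : ℤ) ↔ eIn (evo n i ω m') (ω s) = d) := by
    intro ω hω d
    rw [Dmat_eq (mem_coalSpace.1 hω) hj2 hji hi hn s rfl, hev ω hω]
    simp only [eIn]
    omega
  have hsub : ∀ ω ∈ coalSpace n, evo n i ω m' ⊆ Finset.range (n - (s : ℕ)) := by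
    intro ω hω
    rw [hsval]
    exact evo_subset (mem_coalSpace.1 hω) hii (by omega)
  set SC := ∑ ω ∈ coalSpace n, ((evo n i ω m').card.choose 2 : ℝ) with hSCdef
  set SM := ∑ ω ∈ coalSpace n, ((evo n i ω m').card : ℝ) with hSMdef
  set N2 := ((coalSpace n).filter (fun ω => eIn (evo n i ω m') (ω s) = 2)).card with hN2def
  set N1 := ((coalSpace n).filter (fun ω => eIn (evo n i ω m') (ω s) = 1)).card with hN1def
  set N0 := ((coalSpace n).filter (fun ω => eIn (evo n i ω m') (ω s) = 0)).card with hN0def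
  set SD := ∑ ω ∈ coalSpace n, (eIn (evo n i ω m') (ω s) : ℝ) with hSDdef
  clear_value N2 N1 N0
  have hN2r : (((coalSpace n).filter (fun ω => eIn (evo n i ω m') (ω s) = 2)).card : ℝ)
      = (N2 : ℝ) := by rw [hN2def]
  have hN1r : (((coalSpace n).filter (fun ω => eIn (evo n i ω m') (ω s) = 1)).card : ℝ)
      = (N1 : ℝ) := by rw [hN1def]
  have hN0r : (((coalSpace n).filter (fun ω => eIn (evo n i ω m') (ω s) = 0)).card : ℝ)
      = (N0 : ℝ) := by rw [hN0def]
  clear hN2def hN1def hN0def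
  -- resample for N2
  have hr2 := resample (n := n) (i0 := i) m' s hsval
    (fun p A => if eIn A p = 2 then (1 : ℝ) else 0)
  have hr2L : ∑ ω ∈ coalSpace n,
      (if eIn (evo n i ω m') (ω s) = 2 then (1 : ℝ) else 0) = (N2 : ℝ) := by
    rw [Finset.sum_boole]
    exact hN2r
  have hr2R : ∀ ω ∈ coalSpace n,
      ∑ p ∈ pairsAt n (s : ℕ), (if eIn (evo n i ω m') p = 2 then (1 : ℝ) else 0)
        = (((evo n i ω m').card.choose 2 : ℕ) : ℝ) := by
    intro ω hω
    rw [Finset.sum_boole, count_e2 (hsub ω hω)]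
  rw [hr2L, Finset.sum_congr rfl hr2R, card_pairsAt, hnts] at hr2
  have E1 : (((j + 1).choose 2 : ℕ) : ℝ) * (N2 : ℝ) = SC := hr2
  -- resample for SD
  have hrD := resample (n := n) (i0 := i) m' s hsval (fun p A => (eIn A p : ℝ))
  have hrDR : ∀ ω ∈ coalSpace n,
      ∑ p ∈ pairsAt n (s : ℕ), (eIn (evo n i ω m') p : ℝ)
        = ((evo n i ω m').card : ℝ) * (j : ℝ) := by
    intro ω hω
    rw [sum_eIn_cast (hsub ω hω), hnts]
    push_cast
    ring
  rw [Finset.sum_congr rfl hrDR, card_pairsAt, hnts] at hrD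
  have E3 : (((j + 1).choose 2 : ℕ) : ℝ) * SD = SM * (j : ℝ) := by
    rw [hSDdef, hSMdef, hrD, Finset.sum_mul]
  -- closed forms
  have hSCc := SC_closed (i := i) (j := j) hn hj2 hji hi m' le_rfl
  have hSMc := SM_closed (i := i) (j := j) hn hj2 hji hi m' le_rfl
  rw [show i - m' = j by omega, show i + 1 - m' = j + 1 by omega, ← hSCdef] at hSCc
  rw [show i + 1 - m' = j + 1 by omega, ← hSMdef] at hSMc
  -- nonzero facts
  have hCj1 : (((j + 1).choose 2 : ℕ) : ℝ) ≠ 0 := by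
    have : 0 < (j + 1).choose 2 := Nat.choose_pos (by omega)
    positivity
  have hCi1 : (((i + 1).choose 2 : ℕ) : ℝ) ≠ 0 := by
    have : 0 < (i + 1).choose 2 := Nat.choose_pos (by omega)
    positivity
  have hCi : ((i.choose 2 : ℕ) : ℝ) ≠ 0 := by
    have : 0 < i.choose 2 := Nat.choose_pos (by omega)
    positivity
  have fCi : ((i.choose 2 : ℕ) : ℝ) = (i : ℝ) * ((i : ℝ) - 1) / 2 := by
    rw [Nat.cast_choose_two]
  have fCj : ((j.choose 2 : ℕ) : ℝ) = (j : ℝ) * ((j : ℝ) - 1) / 2 := by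
    rw [Nat.cast_choose_two]
  have fCi1 : (((i + 1).choose 2 : ℕ) : ℝ) = ((i : ℝ) + 1) * (i : ℝ) / 2 := by
    rw [Nat.cast_choose_two]; push_cast; ring
  have fCj1 : (((j + 1).choose 2 : ℕ) : ℝ) = ((j : ℝ) + 1) * (j : ℝ) / 2 := by
    rw [Nat.cast_choose_two]; push_cast; ring
  have hSCCi : SC * ((i.choose 2 : ℕ) : ℝ) =
      (N : ℝ) * (((j.choose 2 : ℕ) : ℝ) * (((j + 1).choose 2 : ℕ) : ℝ)) := by
    apply mul_right_cancel₀ hCi1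
    calc SC * ((i.choose 2 : ℕ) : ℝ) * (((i + 1).choose 2 : ℕ) : ℝ)
        = SC * (((i.choose 2 : ℕ) : ℝ) * (((i + 1).choose 2 : ℕ) : ℝ)) := by ring
      _ = (N : ℝ) * (((i + 1).choose 2 : ℕ) : ℝ) *
            (((j.choose 2 : ℕ) : ℝ) * (((j + 1).choose 2 : ℕ) : ℝ)) := hSCc
      _ = (N : ℝ) * (((j.choose 2 : ℕ) : ℝ) * (((j + 1).choose 2 : ℕ) : ℝ)) *
            (((i + 1).choose 2 : ℕ) : ℝ) := by ring
  have G2 : (N2 : ℝ) * ((i.choose 2 : ℕ) : ℝ) = (N : ℝ) * ((j.choose 2 : ℕ) : ℝ) := by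
    apply mul_left_cancel₀ hCj1
    calc (((j + 1).choose 2 : ℕ) : ℝ) * ((N2 : ℝ) * ((i.choose 2 : ℕ) : ℝ))
        = ((((j + 1).choose 2 : ℕ) : ℝ) * (N2 : ℝ)) * ((i.choose 2 : ℕ) : ℝ) := by ring
      _ = SC * ((i.choose 2 : ℕ) : ℝ) := by rw [E1]
      _ = (N : ℝ) * (((j.choose 2 : ℕ) : ℝ) * (((j + 1).choose 2 : ℕ) : ℝ)) := hSCCi
      _ = (((j + 1).choose 2 : ℕ) : ℝ) * ((N : ℝ) * ((j.choose 2 : ℕ) : ℝ)) := by ring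
  have GD : SD * (((i + 1).choose 2 : ℕ) : ℝ) = (N : ℝ) * ((i : ℝ) + 1) * (j : ℝ) := by
    apply mul_left_cancel₀ hCj1
    calc (((j + 1).choose 2 : ℕ) : ℝ) * (SD * (((i + 1).choose 2 : ℕ) : ℝ))
        = ((((j + 1).choose 2 : ℕ) : ℝ) * SD) * (((i + 1).choose 2 : ℕ) : ℝ) := by ring
      _ = (SM * (j : ℝ)) * (((i + 1).choose 2 : ℕ) : ℝ) := by rw [E3]
      _ = (SM * (((i + 1).choose 2 : ℕ) : ℝ)) * (j : ℝ) := by ring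
      _ = ((N : ℝ) * ((i : ℝ) + 1) * (((j + 1).choose 2 : ℕ) : ℝ)) * (j : ℝ) := by rw [hSMc]
      _ = (((j + 1).choose 2 : ℕ) : ℝ) * ((N : ℝ) * ((i : ℝ) + 1) * (j : ℝ)) := by ring
  have hE5 : SD = 2 * (N2 : ℝ) + (N1 : ℝ) := by
    have hpt : ∀ ω ∈ coalSpace n, (eIn (evo n i ω m') (ω s) : ℝ) =
        2 * (if eIn (evo n i ω m') (ω s) = 2 then (1 : ℝ) else 0) +
        (if eIn (evo n i ω m') (ω s) = 1 then (1 : ℝ) else 0) := by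
      intro ω _
      have he : eIn (evo n i ω m') (ω s) ≤ 2 := eIn_le_two
      interval_cases h : eIn (evo n i ω m') (ω s) <;> norm_num
    rw [hSDdef, Finset.sum_congr rfl hpt, Finset.sum_add_distrib, ← Finset.mul_sum,
      Finset.sum_boole, Finset.sum_boole, hN2r, hN1r]
  have hE6 : (N : ℝ) = (N2 : ℝ) + (N1 : ℝ) + (N0 : ℝ) := by
    have hpt : ∀ ω ∈ coalSpace n, (1 : ℝ) =
        (if eIn (evo n i ω m') (ω s) = 2 then (1 : ℝ) else 0) +
        (if eIn (evo n i ω m') (ω s) = 1 then (1 : ℝ) else 0) +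
        (if eIn (evo n i ω m') (ω s) = 0 then (1 : ℝ) else 0) := by
      intro ω _
      have he : eIn (evo n i ω m') (ω s) ≤ 2 := eIn_le_two
      interval_cases h : eIn (evo n i ω m') (ω s) <;> norm_num
    have h1 : ∑ ω ∈ coalSpace n, (1 : ℝ) = (N : ℝ) := by
      rw [Finset.sum_const, nsmul_eq_mul, mul_one, hNdef]
    rw [← h1, Finset.sum_congr rfl hpt, Finset.sum_add_distrib, Finset.sum_add_distrib,
      Finset.sum_boole, Finset.sum_boole, Finset.sum_boole, hN2r, hN1r, hN0r]
  -- value equations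
  have hine : (i : ℝ) ≠ 0 := Nat.cast_ne_zero.2 (by omega)
  have h2i : (2 : ℝ) ≤ (i : ℝ) := by exact_mod_cast hi2
  have hia : (i : ℝ) * ((i : ℝ) - 1) ≠ 0 :=
    mul_ne_zero hine (by intro h; linarith [h2i])
  have ha1 : (i : ℝ) + 1 ≠ 0 := by positivity
  have vN2 : (N2 : ℝ) * ((i : ℝ) * ((i : ℝ) - 1)) = (N : ℝ) * ((j : ℝ) * ((j : ℝ) - 1)) := by
    rw [fCi, fCj] at G2
    linear_combination 2 * G2
  have vSD : SD * (i : ℝ) = 2 * (j : ℝ) * (N : ℝ) := by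
    rw [fCi1] at GD
    apply mul_left_cancel₀ ha1
    linear_combination 2 * GD
  have vN1 : (N1 : ℝ) * ((i : ℝ) * ((i : ℝ) - 1)) =
      2 * (j : ℝ) * ((i : ℝ) - (j : ℝ)) * (N : ℝ) := by
    linear_combination ((i : ℝ) - 1) * vSD - 2 * vN2 - (i : ℝ) * ((i : ℝ) - 1) * hE5
  have vN0 : (N0 : ℝ) * ((i : ℝ) * ((i : ℝ) - 1)) =
      ((i : ℝ) - (j : ℝ)) * ((i : ℝ) - (j : ℝ) - 1) * (N : ℝ) := by
    linear_combination (-(i : ℝ)) * ((i : ℝ) - 1) * hE6 - vN1 - vN2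
  -- filter identifications
  have hP2 : coalP n (fun ω => DmatOf n ω i j = 2) = (N2 : ℝ) / (N : ℝ) := by
    have hfil : ((coalSpace n).filter (fun ω => eIn (evo n i ω m') (ω s) = 2)).card = N2 := by
      exact_mod_cast hN2r
    have hfilD : ∀ inst : DecidablePred (fun ω => DmatOf n ω i j = (2 : ℤ)),
        (@Finset.filter _ (fun ω => DmatOf n ω i j = (2 : ℤ)) inst (coalSpace n)).card
          = N2 := fun inst =>
      (@card_filter_eq_of_iff _ (coalSpace n) _ _ inst _
        (fun ω hω => by simpa using hDe ω hω 2)).trans hfil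
    unfold coalP
    rw [← hNdef, hfilD]
  have hP1 : coalP n (fun ω => DmatOf n ω i j = 1) = (N1 : ℝ) / (N : ℝ) := by
    have hfil : ((coalSpace n).filter (fun ω => eIn (evo n i ω m') (ω s) = 1)).card = N1 := by
      exact_mod_cast hN1r
    have hfilD : ∀ inst : DecidablePred (fun ω => DmatOf n ω i j = (1 : ℤ)),
        (@Finset.filter _ (fun ω => DmatOf n ω i j = (1 : ℤ)) inst (coalSpace n)).card
          = N1 := fun inst =>
      (@card_filter_eq_of_iff _ (coalSpace n) _ _ inst _
        (fun ω hω => by simpa using hDe ω hω 1)).trans hfil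
    unfold coalP
    rw [← hNdef, hfilD]
  have hP0 : coalP n (fun ω => DmatOf n ω i j = 0) = (N0 : ℝ) / (N : ℝ) := by
    have hfil : ((coalSpace n).filter (fun ω => eIn (evo n i ω m') (ω s) = 0)).card = N0 := by
      exact_mod_cast hN0r
    have hfilD : ∀ inst : DecidablePred (fun ω => DmatOf n ω i j = (0 : ℤ)),
        (@Finset.filter _ (fun ω => DmatOf n ω i j = (0 : ℤ)) inst (coalSpace n)).card
          = N0 := fun inst =>
      (@card_filter_eq_of_iff _ (coalSpace n) _ _ inst _
        (fun ω hω => by simpa using hDe ω hω 0)).trans hfil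
    unfold coalP
    rw [← hNdef, hfilD]
  have hEnum : ∑ ω ∈ coalSpace n, ((DmatOf n ω i j : ℤ) : ℝ) = SD := by
    rw [hSDdef]
    refine Finset.sum_congr rfl ?_
    intro ω hω
    have h := (hDe ω hω (eIn (evo n i ω m') (ω s))).2 rfl
    rw [h]
    push_cast
    ring
  refine ⟨?_, ?_, ?_, ?_⟩
  · rw [hP2, div_eq_div_iff hNne hia]
    linear_combination vN2
  · rw [hP1, div_eq_div_iff hNne hia]
    linear_combination vN1
  · rw [hP0, div_eq_div_iff hNne hia]
    linear_combination vN0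
  · unfold coalE
    rw [hEnum, ← hNdef, div_eq_div_iff hNne hine]
    linear_combination vSD
end
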